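/- arXiv:1608.06020 — 5 statements merged into one kernel-verified Lean document; each statement's English description precedes it below -/
import Mathlib

section
/- Let H, K be separable complex Hilbert spaces. Suppose {G_i : K → HS(H)}_{i∈ℕ} and {F_i : K → HS(H)}_{i∈ℕ} are bounded linear maps into the Hilbert–Schmidt operators satisfying the Bessel conditions Σ_i ‖G_i f‖²_{HS} ≤ B_G ‖f‖² and Σ_i ‖F_i f‖²_{HS} ≤ B_F ‖f‖² for all f ∈ K, and let m ∈ ℓ^∞(ℕ). Then for every f ∈ K the series M_{m,F,G}(f) = Σ_i m_i F_i*(G_i f) converges in K, defines a bounded linear operator on K, and ‖M_{m,F,G}‖ ≤ √(B_F B_G) · sup_i |m_i|. -/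
/-- Bessel multiplier for Hilbert–Schmidt Bessel sequences.  Here `E` plays the role of the
Hilbert space `HS(H)` of Hilbert–Schmidt operators on a separable Hilbert space `H`.
If `{G_i}` and `{F_i}` are HS-Bessel sequences for `K` with bounds `B_G`, `B_F` and
`m ∈ ℓ^∞`, then `M_{m,F,G} f = ∑_i m_i F_i*(G_i f)` converges for every `f`, defines a
bounded operator on `K`, and `‖M_{m,F,G}‖ ≤ √(B_F B_G) ⬝ sup_i |m_i|`. -/
theorem hs_bessel_multiplier_bounded
    {K E : Type*} [NormedAddCommGroup K] [InnerProductSpace ℂ K] [CompleteSpace K]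
    [NormedAddCommGroup E] [InnerProductSpace ℂ E] [CompleteSpace E]
    (G F : ℕ → K →L[ℂ] E) (BG BF : ℝ) (m : ℕ → ℂ)
    (hG : ∀ f : K, Summable (fun i => ‖G i f‖ ^ 2) ∧ ∑' i, ‖G i f‖ ^ 2 ≤ BG * ‖f‖ ^ 2)
    (hF : ∀ f : K, Summable (fun i => ‖F i f‖ ^ 2) ∧ ∑' i, ‖F i f‖ ^ 2 ≤ BF * ‖f‖ ^ 2)
    (hm : BddAbove (Set.range fun i => ‖m i‖)) :
    ∃ M : K →L[ℂ] K,
      (∀ f : K,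
        HasSum (fun i => m i • ContinuousLinearMap.adjoint (F i) (G i f)) (M f)) ∧
      ‖M‖ ≤ Real.sqrt (BF * BG) * ⨆ i, ‖m i‖ := by
  classical
  set Cm : ℝ := ⨆ i, ‖m i‖ with hCmdef
  have hCm : ∀ i, ‖m i‖ ≤ Cm := fun i => le_ciSup hm i
  have hCm0 : 0 ≤ Cm := le_trans (norm_nonneg (m 0)) (hCm 0)
  rcases subsingleton_or_nontrivial K with hK | hK
  · refine ⟨0, fun f => ?_, ?_⟩
    · have hf : f = 0 := Subsingleton.elim f 0
      subst hf
      simpa using hasSum_zero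
    · simp only [norm_zero]
      exact mul_nonneg (Real.sqrt_nonneg _) hCm0
  · obtain ⟨f0, hf0⟩ := exists_ne (0 : K)
    have hf0n : (0:ℝ) < ‖f0‖ ^ 2 := by
      have := norm_pos_iff.2 hf0
      positivity
    have hBF : 0 ≤ BF := by
      have h1 : (0:ℝ) ≤ ∑' i, ‖F i f0‖ ^ 2 := tsum_nonneg fun i => by positivity
      nlinarith [(hF f0).2]
    have hBG : 0 ≤ BG := by
      have h1 : (0:ℝ) ≤ ∑' i, ‖G i f0‖ ^ 2 := tsum_nonneg fun i => by positivity
      nlinarith [(hG f0).2]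
    -- key finite estimate
    have key : ∀ (f : K) (t : Finset ℕ),
        ‖∑ i ∈ t, m i • ContinuousLinearMap.adjoint (F i) (G i f)‖ ≤
          Cm * Real.sqrt BF * Real.sqrt (∑ i ∈ t, ‖G i f‖ ^ 2) := by
      intro f t
      set v : K := ∑ i ∈ t, m i • ContinuousLinearMap.adjoint (F i) (G i f) with hv
      have hv2 : (‖v‖ : ℝ) ^ 2 = ‖(inner ℂ v v : ℂ)‖ := by
        rw [inner_self_eq_norm_sq_to_K]
        simp
      have hinner : (inner ℂ v v : ℂ) = ∑ i ∈ t, m i * inner ℂ (F i v) (G i f) := by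
        rw [hv, inner_sum]
        refine Finset.sum_congr rfl fun i hi => ?_
        rw [inner_smul_right, ContinuousLinearMap.adjoint_inner_right]
      have h1 : ‖v‖ ^ 2 ≤ Cm * ∑ i ∈ t, ‖G i f‖ * ‖F i v‖ := by
        rw [hv2, hinner]
        calc ‖∑ i ∈ t, m i * inner ℂ (F i v) (G i f)‖
            ≤ ∑ i ∈ t, ‖m i * (inner ℂ (F i v) (G i f) : ℂ)‖ := norm_sum_le _ _
          _ ≤ ∑ i ∈ t, Cm * (‖G i f‖ * ‖F i v‖) := by
              refine Finset.sum_le_sum fun i hi => ?_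
              rw [norm_mul]
              have := norm_inner_le_norm (𝕜 := ℂ) (F i v) (G i f)
              calc ‖m i‖ * ‖(inner ℂ (F i v) (G i f) : ℂ)‖
                  ≤ Cm * (‖F i v‖ * ‖G i f‖) := by
                    exact mul_le_mul (hCm i) this (norm_nonneg _) hCm0
                _ = Cm * (‖G i f‖ * ‖F i v‖) := by ring
          _ = Cm * ∑ i ∈ t, ‖G i f‖ * ‖F i v‖ := by rw [Finset.mul_sum]
      have hCS : ∑ i ∈ t, ‖G i f‖ * ‖F i v‖ ≤
          Real.sqrt (∑ i ∈ t, ‖G i f‖ ^ 2) * Real.sqrt (∑ i ∈ t, ‖F i v‖ ^ 2) := by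
        have := Finset.sum_mul_sq_le_sq_mul_sq t (fun i => ‖G i f‖) (fun i => ‖F i v‖)
        have hnn : (0:ℝ) ≤ ∑ i ∈ t, ‖G i f‖ * ‖F i v‖ :=
          Finset.sum_nonneg fun i _ => mul_nonneg (norm_nonneg _) (norm_nonneg _)
        calc ∑ i ∈ t, ‖G i f‖ * ‖F i v‖
            = Real.sqrt ((∑ i ∈ t, ‖G i f‖ * ‖F i v‖) ^ 2) := (Real.sqrt_sq hnn).symm
          _ ≤ Real.sqrt ((∑ i ∈ t, ‖G i f‖ ^ 2) * ∑ i ∈ t, ‖F i v‖ ^ 2) :=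
              Real.sqrt_le_sqrt this
          _ = _ := Real.sqrt_mul (Finset.sum_nonneg fun i _ => by positivity) _
      have hFv : Real.sqrt (∑ i ∈ t, ‖F i v‖ ^ 2) ≤ Real.sqrt BF * ‖v‖ := by
        have h2 : ∑ i ∈ t, ‖F i v‖ ^ 2 ≤ BF * ‖v‖ ^ 2 := by
          refine le_trans (Summable.sum_le_tsum t (fun i _ => by positivity) (hF v).1) (hF v).2
        calc Real.sqrt (∑ i ∈ t, ‖F i v‖ ^ 2) ≤ Real.sqrt (BF * ‖v‖ ^ 2) :=
              Real.sqrt_le_sqrt h2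
          _ = Real.sqrt BF * ‖v‖ := by
              rw [Real.sqrt_mul hBF, Real.sqrt_sq (norm_nonneg _)]
      have h3 : ‖v‖ ^ 2 ≤ (Cm * Real.sqrt BF * Real.sqrt (∑ i ∈ t, ‖G i f‖ ^ 2)) * ‖v‖ := by
        calc ‖v‖ ^ 2 ≤ Cm * ∑ i ∈ t, ‖G i f‖ * ‖F i v‖ := h1
          _ ≤ Cm * (Real.sqrt (∑ i ∈ t, ‖G i f‖ ^ 2) * (Real.sqrt BF * ‖v‖)) := by
              refine mul_le_mul_of_nonneg_left ?_ hCm0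
              exact le_trans hCS (mul_le_mul_of_nonneg_left hFv (Real.sqrt_nonneg _))
          _ = (Cm * Real.sqrt BF * Real.sqrt (∑ i ∈ t, ‖G i f‖ ^ 2)) * ‖v‖ := by ring
      rcases eq_or_lt_of_le (norm_nonneg v) with h0 | h0
      · rw [← h0]; positivity
      · have := h3
        rw [sq] at this
        exact le_of_mul_le_mul_right this h0
    -- summability
    have hsum : ∀ f : K,
        Summable (fun i => m i • ContinuousLinearMap.adjoint (F i) (G i f)) := by
      intro f
      rw [summable_iff_vanishing_norm]
      intro ε hε
      set C := Cm * Real.sqrt BF with hC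
      have hC0 : 0 ≤ C := mul_nonneg hCm0 (Real.sqrt_nonneg _)
      set δ : ℝ := (ε / (C + 1)) ^ 2 with hδ
      have hδ0 : 0 < δ := by positivity
      obtain ⟨s, hs⟩ := summable_iff_vanishing_norm.1 (hG f).1 δ hδ0
      refine ⟨s, fun t ht => ?_⟩
      have h1 : ∑ i ∈ t, ‖G i f‖ ^ 2 < δ := by
        have := hs t ht
        calc ∑ i ∈ t, ‖G i f‖ ^ 2 ≤ |∑ i ∈ t, ‖G i f‖ ^ 2| := le_abs_self _
          _ = ‖∑ i ∈ t, ‖G i f‖ ^ 2‖ := (Real.norm_eq_abs _).symm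
          _ < δ := this
      calc ‖∑ i ∈ t, m i • ContinuousLinearMap.adjoint (F i) (G i f)‖
          ≤ C * Real.sqrt (∑ i ∈ t, ‖G i f‖ ^ 2) := key f t
        _ ≤ C * Real.sqrt δ := by
            exact mul_le_mul_of_nonneg_left (Real.sqrt_le_sqrt h1.le) hC0
        _ = C * (ε / (C + 1)) := by
            rw [hδ, Real.sqrt_sq (by positivity)]
        _ < ε := by
            rw [div_eq_inv_mul, ← mul_assoc]
            have : C * (C + 1)⁻¹ < 1 := by
              rw [mul_inv_lt_iff₀ (by linarith)]
              linarith
            nlinarith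
    -- norm bound on the tsum
    have hbound : ∀ f : K,
        ‖∑' i, m i • ContinuousLinearMap.adjoint (F i) (G i f)‖ ≤
          Real.sqrt (BF * BG) * Cm * ‖f‖ := by
      intro f
      have hhs := (hsum f).hasSum
      have htend := hhs.tendsto_sum_nat
      -- bound each finite partial sum
      have hb : ∀ t : Finset ℕ,
          ‖∑ i ∈ t, m i • ContinuousLinearMap.adjoint (F i) (G i f)‖ ≤
            Real.sqrt (BF * BG) * Cm * ‖f‖ := by
        intro t
        have h1 : ∑ i ∈ t, ‖G i f‖ ^ 2 ≤ BG * ‖f‖ ^ 2 :=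
          le_trans (Summable.sum_le_tsum t (fun i _ => by positivity) (hG f).1) (hG f).2
        calc ‖∑ i ∈ t, m i • ContinuousLinearMap.adjoint (F i) (G i f)‖
            ≤ Cm * Real.sqrt BF * Real.sqrt (∑ i ∈ t, ‖G i f‖ ^ 2) := key f t
          _ ≤ Cm * Real.sqrt BF * Real.sqrt (BG * ‖f‖ ^ 2) := by
              exact mul_le_mul_of_nonneg_left (Real.sqrt_le_sqrt h1)
                (mul_nonneg hCm0 (Real.sqrt_nonneg _))
          _ = Real.sqrt (BF * BG) * Cm * ‖f‖ := by
              rw [Real.sqrt_mul hBG, Real.sqrt_sq (norm_nonneg _), Real.sqrt_mul hBF]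
              ring
      have := hhs
      refine le_of_tendsto' (this.tendsto_sum_nat.norm) ?_ |>.trans le_rfl
      · intro n; exact hb (Finset.range n)
    -- build the operator
    let Mlin : K →ₗ[ℂ] K :=
      { toFun := fun f => ∑' i, m i • ContinuousLinearMap.adjoint (F i) (G i f)
        map_add' := by
          intro f g
          have : (fun i => m i • ContinuousLinearMap.adjoint (F i) (G i (f + g))) =
              fun i => m i • ContinuousLinearMap.adjoint (F i) (G i f) +
                m i • ContinuousLinearMap.adjoint (F i) (G i g) := by
            funext i; simp [map_add, smul_add]
          rw [this, Summable.tsum_add (hsum f) (hsum g)]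
        map_smul' := by
          intro c f
          dsimp only [RingHom.id_apply]
          have : (fun i => m i • ContinuousLinearMap.adjoint (F i) (G i (c • f))) =
              fun i => c • (m i • ContinuousLinearMap.adjoint (F i) (G i f)) := by
            funext i; simp [map_smul, smul_comm c (m i)]
          rw [this, tsum_const_smul'' c] }
    refine ⟨Mlin.mkContinuous (Real.sqrt (BF * BG) * Cm) hbound, fun f => (hsum f).hasSum, ?_⟩
    exact (Mlin.mkContinuous_norm_le (by positivity) hbound)
end

section
/- Let {G_i} be a HS-frame for K with frame operator S_G. Then the canonical dual family {G_i ∘ S_G^{-1}} is also a HS-frame for K, with frame bounds B^{-1} and A^{-1} (where A, B are frame bounds of G), and satisfies the reconstruction formula f = Σ_i G_i*(G_i S_G^{-1} f) for all f ∈ K. -/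
/-- The canonical dual of a HS-frame.  Here `E` plays the role of the Hilbert space `HS(H)`
of Hilbert–Schmidt operators.  If `{G_i}` is a HS-frame for `K` with bounds `0 < A ≤ B` and
invertible frame operator `S` (`S f = ∑_i G_i*(G_i f)`), then `{G_i ∘ S⁻¹}` is a HS-frame
with bounds `B⁻¹` and `A⁻¹`, and `f = ∑_i G_i*(G_i (S⁻¹ f))` for every `f ∈ K`. -/
theorem hs_canonical_dual_frame
    {K E : Type*} [NormedAddCommGroup K] [InnerProductSpace ℂ K] [CompleteSpace K]
    [NormedAddCommGroup E] [InnerProductSpace ℂ E] [CompleteSpace E]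
    (G : ℕ → K →L[ℂ] E) (A B : ℝ) (hA : 0 < A)
    (hframe : ∀ f : K, Summable (fun i => ‖G i f‖ ^ 2) ∧
      A * ‖f‖ ^ 2 ≤ ∑' i, ‖G i f‖ ^ 2 ∧ ∑' i, ‖G i f‖ ^ 2 ≤ B * ‖f‖ ^ 2)
    (S : K ≃L[ℂ] K)
    (hS : ∀ f : K, HasSum (fun i => ContinuousLinearMap.adjoint (G i) (G i f)) (S f)) :
    (∀ f : K, Summable (fun i => ‖G i (S.symm f)‖ ^ 2) ∧
      B⁻¹ * ‖f‖ ^ 2 ≤ ∑' i, ‖G i (S.symm f)‖ ^ 2 ∧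
        ∑' i, ‖G i (S.symm f)‖ ^ 2 ≤ A⁻¹ * ‖f‖ ^ 2) ∧
      ∀ f : K,
        HasSum (fun i => ContinuousLinearMap.adjoint (G i) (G i (S.symm f))) f := by
  have hself : ∀ u : K, (inner ℂ u u : ℂ).re = ‖u‖ ^ 2 := by
    intro u
    rw [inner_self_eq_norm_sq_to_K]
    simp [← Complex.ofReal_pow]
  have hselfE : ∀ u : E, (inner ℂ u u : ℂ).re = ‖u‖ ^ 2 := by
    intro u
    rw [inner_self_eq_norm_sq_to_K]
    simp [← Complex.ofReal_pow]
  -- the sesquilinear form associated to the frame operator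
  have hP : ∀ x y : K, HasSum (fun i => (inner ℂ (G i x) (G i y) : ℂ)) (inner ℂ x (S y)) := by
    intro x y
    have h := (hS y).mapL (innerSL ℂ x)
    simpa [ContinuousLinearMap.adjoint_inner_right] using h
  have hQ : ∀ x : K, HasSum (fun i => ‖G i x‖ ^ 2) (Complex.re (inner ℂ x (S x))) := by
    intro x
    have h := (hP x x).mapL Complex.reCLM
    simp only [Complex.reCLM_apply] at h
    convert h using 2 with i
    exact (hselfE _).symm
  have hQval : ∀ x : K, (∑' i, ‖G i x‖ ^ 2) = Complex.re (inner ℂ x (S x)) :=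
    fun x => (hQ x).tsum_eq
  have hQnn : ∀ x : K, 0 ≤ Complex.re (inner ℂ x (S x)) := by
    intro x
    rw [← hQval x]
    exact tsum_nonneg fun i => by positivity
  -- symmetry
  have hsym : ∀ x y : K, Complex.re (inner ℂ y (S x) : ℂ) = Complex.re (inner ℂ x (S y) : ℂ) := by
    intro x y
    have h1 := (hP x y).star
    simp only [star, RingHomInvPair.comp_eq₂, inner_conj_symm] at h1
    have h2 : (inner ℂ y (S x) : ℂ) = starRingEnd ℂ (inner ℂ x (S y)) := by
      refine (hP y x).unique ?_
      simpa [inner_conj_symm] using (hP x y).star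
    rw [h2]
    exact Complex.conj_re _
  -- Cauchy–Schwarz for the form
  have key : ∀ x y : K, (Complex.re (inner ℂ x (S y) : ℂ)) ^ 2 ≤
      Complex.re (inner ℂ x (S x) : ℂ) * Complex.re (inner ℂ y (S y) : ℂ) := by
    intro x y
    have hb : ∀ b : ℝ, 0 ≤ Complex.re (inner ℂ y (S y) : ℂ) * (b * b)
        + (-2 * Complex.re (inner ℂ x (S y) : ℂ)) * b + Complex.re (inner ℂ x (S x) : ℂ) := by
      intro b
      have h0 := hQnn (x - (b : ℂ) • y)
      have hexp : (inner ℂ (x - (b:ℂ) • y) (S (x - (b:ℂ) • y)) : ℂ)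
          = inner ℂ x (S x) - (b:ℂ) * (inner ℂ x (S y) + inner ℂ y (S x))
            + ((b * b : ℝ) : ℂ) * inner ℂ y (S y) := by
        rw [map_sub, map_smul]
        rw [inner_sub_left, inner_sub_right, inner_sub_right, inner_smul_left,
          inner_smul_right, inner_smul_left, inner_smul_right]
        push_cast
        simp [Complex.conj_ofReal]
        ring
      rw [hexp] at h0
      simp only [Complex.sub_re, Complex.add_re, Complex.re_ofReal_mul] at h0
      rw [hsym x y] at h0
      ring_nf at h0 ⊢
      linarith [h0]
    have hd := discrim_le_zero hb
    rw [discrim] at hd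
    nlinarith [hd]
  refine ⟨fun f => ?_, fun f => by simpa using hS (S.symm f)⟩
  set g := S.symm f with hg
  have hSg : S g = f := S.apply_symm_apply f
  refine ⟨(hframe g).1, ?_, ?_⟩
  · -- lower bound
    rcases eq_or_ne f 0 with rfl | hf
    · simp only [norm_zero]
      rw [hQval]
      simpa using hQnn g
    · have hfpos : (0:ℝ) < ‖f‖ ^ 2 := by
        have := norm_pos_iff.mpr hf
        positivity
      have hBpos : 0 < B := by
        have h1 := (hframe f).2.1
        have h2 := (hframe f).2.2
        nlinarith
      have hk := key f g
      have hQf : Complex.re (inner ℂ f (S f) : ℂ) ≤ B * ‖f‖ ^ 2 := by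
        rw [← hQval f]; exact (hframe f).2.2
      have hfg : Complex.re (inner ℂ f (S g) : ℂ) = ‖f‖ ^ 2 := by
        rw [hSg]; exact hself f
      rw [hfg, ← hQval g] at hk
      have htnn : 0 ≤ ∑' i, ‖G i g‖ ^ 2 := tsum_nonneg fun i => by positivity
      rw [inv_mul_le_iff₀ hBpos]
      nlinarith [hk, mul_le_mul_of_nonneg_right hQf htnn, hfpos]
  · -- upper bound
    have hle : (∑' i, ‖G i g‖ ^ 2) ≤ ‖g‖ * ‖f‖ := by
      rw [hQval g, ← hSg]
      simpa using re_inner_le_norm (𝕜 := ℂ) g (S g)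
    have hlow : A * ‖g‖ ^ 2 ≤ ∑' i, ‖G i g‖ ^ 2 := (hframe g).2.1
    by_cases hgne : g = 0
    · have hf0 : f = 0 := by rw [← hSg, hgne, map_zero]
      rw [hgne] at hle
      simp only [norm_zero, zero_mul] at hle
      have h2 : 0 ≤ A⁻¹ * ‖f‖ ^ 2 := by positivity
      rw [hgne]
      exact le_trans hle h2
    · have hgpos : 0 < ‖g‖ := norm_pos_iff.mpr hgne
      have hAg : A * ‖g‖ ≤ ‖f‖ := by nlinarith
      rw [inv_mul_eq_div, le_div_iff₀ hA]
      nlinarith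
end

section
/- Let {G_i} and {F_i} be HS-frames for K such that the ranges of their analysis operators coincide: ran(U_F) = ran(U_G) in ⊕₂ HS(H). Then there exists an invertible bounded operator Q on K such that F_i = G_i ∘ Q for all i (i.e., the two HS-frames are equivalent). -/
lemma lp_norm_sq_eq {E : Type*} [NormedAddCommGroup E]
    (x : lp (fun _ : ℕ => E) 2) : ‖x‖ ^ 2 = ∑' i, ‖(x : ∀ _ : ℕ, E) i‖ ^ 2 := by
  have h := lp.norm_rpow_eq_tsum (p := 2) (by norm_num) x
  have h2 : ((2 : ENNReal).toReal) = (2 : ℝ) := by norm_num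
  rw [h2] at h
  calc ‖x‖ ^ 2 = ‖x‖ ^ (2 : ℝ) := by rw [← Real.rpow_natCast ‖x‖ 2]; norm_num
    _ = ∑' i, ‖(x : ∀ _ : ℕ, E) i‖ ^ (2 : ℝ) := h
    _ = ∑' i, ‖(x : ∀ _ : ℕ, E) i‖ ^ 2 := by
        refine tsum_congr fun i => ?_
        rw [← Real.rpow_natCast _ 2]; norm_num

/-- From a lower frame bound, a norm lower bound for the analysis operator. -/
lemma lower_bound_aux {K E : Type*} [NormedAddCommGroup K] [NormedAddCommGroup E]
    [NormedSpace ℂ K] [NormedSpace ℂ E]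
    (T : ℕ → K →L[ℂ] E) (A : ℝ) (hA : 0 < A)
    (hlow : ∀ f : K, A * ‖f‖ ^ 2 ≤ ∑' i, ‖T i f‖ ^ 2)
    (U : K →L[ℂ] lp (fun _ : ℕ => E) 2)
    (hU : ∀ (f : K) (i : ℕ), (U f : ∀ _ : ℕ, E) i = T i f)
    (f : K) : ‖f‖ ≤ (Real.sqrt A)⁻¹ * ‖U f‖ := by
  have h1 : A * ‖f‖ ^ 2 ≤ ‖U f‖ ^ 2 := by
    rw [lp_norm_sq_eq]
    simpa [hU] using hlow f
  have h2 : Real.sqrt (A * ‖f‖ ^ 2) ≤ Real.sqrt (‖U f‖ ^ 2) :=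
    Real.sqrt_le_sqrt h1
  rw [Real.sqrt_mul hA.le, Real.sqrt_sq (norm_nonneg _), Real.sqrt_sq (norm_nonneg _)] at h2
  have hs : 0 < Real.sqrt A := Real.sqrt_pos.2 hA
  rw [inv_mul_eq_div, le_div_iff₀ hs, mul_comm]
  exact h2

/-- Equal analysis-operator ranges give equivalent HS-frames.  Here `E` plays the role of
the Hilbert space `HS(H)` of Hilbert–Schmidt operators and `lp (fun _ : ℕ => E) 2` is
`⊕₂ HS(H)`.  If `{G_i}` and `{F_i}` are HS-frames for `K` whose analysis operators have the
same range, then there is an invertible bounded operator `Q` on `K` with `F_i = G_i ∘ Q`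
for all `i`. -/
theorem hs_frames_equivalent_of_range_eq
    {K E : Type*} [NormedAddCommGroup K] [InnerProductSpace ℂ K] [CompleteSpace K]
    [NormedAddCommGroup E] [InnerProductSpace ℂ E] [CompleteSpace E]
    (G F : ℕ → K →L[ℂ] E) (AG BG AF BF : ℝ) (hAG : 0 < AG) (hAF : 0 < AF)
    (hGframe : ∀ f : K, Summable (fun i => ‖G i f‖ ^ 2) ∧
      AG * ‖f‖ ^ 2 ≤ ∑' i, ‖G i f‖ ^ 2 ∧ ∑' i, ‖G i f‖ ^ 2 ≤ BG * ‖f‖ ^ 2)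
    (hFframe : ∀ f : K, Summable (fun i => ‖F i f‖ ^ 2) ∧
      AF * ‖f‖ ^ 2 ≤ ∑' i, ‖F i f‖ ^ 2 ∧ ∑' i, ‖F i f‖ ^ 2 ≤ BF * ‖f‖ ^ 2)
    (UG UF : K →L[ℂ] lp (fun _ : ℕ => E) 2)
    (hUG : ∀ (f : K) (i : ℕ), (UG f : ∀ _ : ℕ, E) i = G i f)
    (hUF : ∀ (f : K) (i : ℕ), (UF f : ∀ _ : ℕ, E) i = F i f)
    (hran : Set.range UF = Set.range UG) :
    ∃ Q : K ≃L[ℂ] K, ∀ i, F i = (G i).comp (Q : K →L[ℂ] K) := by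
  -- lower bounds
  have hlG : ∀ f : K, ‖f‖ ≤ (Real.sqrt AG)⁻¹ * ‖UG f‖ :=
    lower_bound_aux G AG hAG (fun f => (hGframe f).2.1) UG hUG
  have hlF : ∀ f : K, ‖f‖ ≤ (Real.sqrt AF)⁻¹ * ‖UF f‖ :=
    lower_bound_aux F AF hAF (fun f => (hFframe f).2.1) UF hUF
  -- injectivity
  have hinjG : Function.Injective UG := by
    intro f g hfg
    have h := hlG (f - g)
    rw [map_sub, hfg, sub_self, norm_zero, mul_zero] at h
    have : ‖f - g‖ = 0 := le_antisymm h (norm_nonneg _)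
    rwa [norm_eq_zero, sub_eq_zero] at this
  have hinjF : Function.Injective UF := by
    intro f g hfg
    have h := hlF (f - g)
    rw [map_sub, hfg, sub_self, norm_zero, mul_zero] at h
    have : ‖f - g‖ = 0 := le_antisymm h (norm_nonneg _)
    rwa [norm_eq_zero, sub_eq_zero] at this
  -- linear equivalences onto ranges
  let eG := LinearEquiv.ofInjective (UG : K →ₗ[ℂ] lp (fun _ : ℕ => E) 2) hinjG
  let eF := LinearEquiv.ofInjective (UF : K →ₗ[ℂ] lp (fun _ : ℕ => E) 2) hinjF
  have hreq : LinearMap.range (UF : K →ₗ[ℂ] lp (fun _ : ℕ => E) 2)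
      = LinearMap.range (UG : K →ₗ[ℂ] lp (fun _ : ℕ => E) 2) := by
    refine Submodule.ext fun x => ?_
    simpa [LinearMap.mem_range] using Set.ext_iff.mp hran x
  let cast := LinearEquiv.ofEq _ _ hreq
  let Q₀ : K ≃ₗ[ℂ] K := eF.trans (cast.trans eG.symm)
  -- key identity: UG (Q₀ f) = UF f
  have hkey : ∀ f : K, UG (Q₀ f) = UF f := by
    intro f
    have : eG (Q₀ f) = cast (eF f) := by
      simp only [Q₀, LinearEquiv.trans_apply, LinearEquiv.apply_symm_apply]
    have h2 := congrArg (Subtype.val) this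
    simpa [eG, eF, cast, LinearEquiv.ofInjective_apply] using h2
  have hkey' : ∀ f : K, UF (Q₀.symm f) = UG f := by
    intro f
    have := hkey (Q₀.symm f)
    rw [Q₀.apply_symm_apply] at this
    exact this.symm
  -- continuity bounds
  have hbnd : ∀ f : K, ‖Q₀ f‖ ≤ ((Real.sqrt AG)⁻¹ * ‖UF‖) * ‖f‖ := by
    intro f
    calc ‖Q₀ f‖ ≤ (Real.sqrt AG)⁻¹ * ‖UG (Q₀ f)‖ := hlG _
      _ = (Real.sqrt AG)⁻¹ * ‖UF f‖ := by rw [hkey]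
      _ ≤ (Real.sqrt AG)⁻¹ * (‖UF‖ * ‖f‖) :=
          mul_le_mul_of_nonneg_left (UF.le_opNorm f) (by positivity)
      _ = ((Real.sqrt AG)⁻¹ * ‖UF‖) * ‖f‖ := by ring
  have hbnd' : ∀ f : K, ‖Q₀.symm f‖ ≤ ((Real.sqrt AF)⁻¹ * ‖UG‖) * ‖f‖ := by
    intro f
    calc ‖Q₀.symm f‖ ≤ (Real.sqrt AF)⁻¹ * ‖UF (Q₀.symm f)‖ := hlF _
      _ = (Real.sqrt AF)⁻¹ * ‖UG f‖ := by rw [hkey']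
      _ ≤ (Real.sqrt AF)⁻¹ * (‖UG‖ * ‖f‖) :=
          mul_le_mul_of_nonneg_left (UG.le_opNorm f) (by positivity)
      _ = ((Real.sqrt AF)⁻¹ * ‖UG‖) * ‖f‖ := by ring
  let Q : K ≃L[ℂ] K :=
    { Q₀ with
      continuous_toFun := AddMonoidHomClass.continuous_of_bound Q₀.toLinearMap _ hbnd
      continuous_invFun := AddMonoidHomClass.continuous_of_bound Q₀.symm.toLinearMap _ hbnd' }
  refine ⟨Q, fun i => ?_⟩
  ext f
  have := congrFun (congrArg (fun x : lp (fun _ : ℕ => E) 2 => (x : ∀ _ : ℕ, E)) (hkey f)) i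
  simp only [hUG, hUF] at this
  exact this.symm
end

section
/- Let {G_i} and {F_i} be HS-frames for K with respect to H. If every dual HS-frame of G is a dual HS-frame of F (where {D_i} is a dual of {G_i} iff Σ_i G_i*(D_i f) = f for all f ∈ K), then G_i = F_i for all i. -/
open scoped InnerProductSpace
open ContinuousLinearMap

namespace HSFrameAux

variable {K E : Type*} [NormedAddCommGroup K] [InnerProductSpace ℂ K] [CompleteSpace K]
    [NormedAddCommGroup E] [InnerProductSpace ℂ E] [CompleteSpace E]

/-- Bessel property with a nonnegative bound. -/
def Bessel (G : ℕ → K →L[ℂ] E) (B : ℝ) : Prop :=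
  0 ≤ B ∧ ∀ f : K, Summable (fun i => ‖G i f‖ ^ 2) ∧ ∑' i, ‖G i f‖ ^ 2 ≤ B * ‖f‖ ^ 2

lemma pert_lower {a b x ε : ℝ} (ha : 0 ≤ a) (hb : 0 ≤ b) (hx : 0 ≤ x) (hε0 : 0 < ε)
    (hε1 : ε ≤ 1) (h : a ≤ x + ε * b) : (1 - ε) * a ^ 2 - ε * b ^ 2 ≤ x ^ 2 := by
  rcases le_or_gt (ε * b) a with hc | hc
  · have h2 : a - ε * b ≤ x := by linarith
    have h3 : (a - ε * b) ^ 2 ≤ x ^ 2 := by nlinarith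
    nlinarith [mul_nonneg hε0.le (sq_nonneg (a - b)), sq_nonneg (ε * b)]
  · have h4 : a ^ 2 ≤ (ε * b) ^ 2 := by nlinarith
    have h5 : (ε * b) ^ 2 ≤ ε * b ^ 2 := by nlinarith [mul_nonneg hε0.le (sq_nonneg b)]
    nlinarith [mul_nonneg hε0.le (sq_nonneg a)]

lemma pert_upper {a b x ε : ℝ} (ha : 0 ≤ a) (hb : 0 ≤ b) (hx : 0 ≤ x) (hε0 : 0 < ε)
    (hε1 : ε ≤ 1) (h : x ≤ a + ε * b) : x ^ 2 ≤ 2 * a ^ 2 + 2 * b ^ 2 := by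
  nlinarith [mul_nonneg hε0.le hb, sq_nonneg (a - ε * b), sq_nonneg (ε * b),
    mul_le_of_le_one_left hb hε1]

lemma bessel_finset_bound {G : ℕ → K →L[ℂ] E} {B : ℝ} (hG : Bessel G B)
    (c : ℕ → E) (s : Finset ℕ) :
    ‖∑ i ∈ s, adjoint (G i) (c i)‖ ^ 2 ≤ B * ∑ i ∈ s, ‖c i‖ ^ 2 := by
  set v : K := ∑ i ∈ s, adjoint (G i) (c i) with hv
  have h1 : ‖v‖ ^ 2 ≤ ∑ i ∈ s, ‖c i‖ * ‖G i v‖ := by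
    rw [← inner_self_eq_norm_sq (𝕜 := ℂ) v]
    nth_rewrite 1 [hv]
    rw [sum_inner, map_sum]
    refine Finset.sum_le_sum fun i _ => ?_
    rw [adjoint_inner_left]
    exact le_trans (RCLike.re_le_norm _) (norm_inner_le_norm _ _)
  have h2 : (∑ i ∈ s, ‖c i‖ * ‖G i v‖) ^ 2 ≤ (∑ i ∈ s, ‖c i‖ ^ 2) * ∑ i ∈ s, ‖G i v‖ ^ 2 :=
    Finset.sum_mul_sq_le_sq_mul_sq s _ _
  have h3 : ∑ i ∈ s, ‖G i v‖ ^ 2 ≤ B * ‖v‖ ^ 2 :=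
    le_trans (Summable.sum_le_tsum s (fun i _ => by positivity) (hG.2 v).1) (hG.2 v).2
  have hc : 0 ≤ ∑ i ∈ s, ‖c i‖ ^ 2 := Finset.sum_nonneg fun i _ => by positivity
  have hs1 : 0 ≤ ∑ i ∈ s, ‖c i‖ * ‖G i v‖ :=
    Finset.sum_nonneg fun i _ => mul_nonneg (norm_nonneg _) (norm_nonneg _)
  have h4 : (‖v‖ ^ 2) ^ 2 ≤ (∑ i ∈ s, ‖c i‖ ^ 2) * (B * ‖v‖ ^ 2) :=
    le_trans (by nlinarith) (mul_le_mul_of_nonneg_left h3 hc)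
  rcases eq_or_lt_of_le (sq_nonneg ‖v‖) with h | h
  · rw [← h]; exact mul_nonneg hG.1 hc
  · nlinarith

lemma bessel_summable_synth {G : ℕ → K →L[ℂ] E} {B : ℝ} (hG : Bessel G B)
    {c : ℕ → E} (hc : Summable fun i => ‖c i‖ ^ 2) :
    Summable fun i => adjoint (G i) (c i) := by
  rw [summable_iff_vanishing_norm]
  intro ε hε
  have hB := hG.1
  have hB1 : (0:ℝ) < B + 1 := by linarith
  have hδ : (0:ℝ) < ε ^ 2 / (B + 1) := div_pos (by positivity) hB1
  obtain ⟨s, hs⟩ := summable_iff_vanishing_norm.1 hc _ hδ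
  refine ⟨s, fun t ht => ?_⟩
  have h1 := bessel_finset_bound hG c t
  have h2 := hs t ht
  have h3 : ∑ i ∈ t, ‖c i‖ ^ 2 < ε ^ 2 / (B + 1) := by
    have : ‖∑ i ∈ t, ‖c i‖ ^ 2‖ = ∑ i ∈ t, ‖c i‖ ^ 2 :=
      Real.norm_of_nonneg (Finset.sum_nonneg fun i _ => by positivity)
    rwa [this] at h2
  have hnn : (0:ℝ) ≤ ∑ i ∈ t, ‖c i‖ ^ 2 := Finset.sum_nonneg fun i _ => by positivity
  have h4 : (∑ i ∈ t, ‖c i‖ ^ 2) * (B + 1) < ε ^ 2 := (lt_div_iff₀ hB1).1 h3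
  by_contra hcon
  push_neg at hcon
  have h5 : ε ^ 2 ≤ ‖∑ i ∈ t, adjoint (G i) (c i)‖ ^ 2 := pow_le_pow_left₀ hε.le hcon 2
  nlinarith

lemma bessel_tsum_bound {G : ℕ → K →L[ℂ] E} {B : ℝ} (hG : Bessel G B)
    {c : ℕ → E} (hc : Summable fun i => ‖c i‖ ^ 2) :
    ‖∑' i, adjoint (G i) (c i)‖ ^ 2 ≤ B * ∑' i, ‖c i‖ ^ 2 := by
  have hsum := bessel_summable_synth hG hc
  have ht : Filter.Tendsto (fun s : Finset ℕ => ‖∑ i ∈ s, adjoint (G i) (c i)‖ ^ 2)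
      Filter.atTop (nhds (‖∑' i, adjoint (G i) (c i)‖ ^ 2)) :=
    ((continuous_pow 2).comp continuous_norm).continuousAt.tendsto.comp hsum.hasSum
  refine le_of_tendsto ht (Filter.Eventually.of_forall fun s => ?_)
  exact le_trans (bessel_finset_bound hG c s)
    (mul_le_mul_of_nonneg_left (Summable.sum_le_tsum s (fun i _ => by positivity) hc) hG.1)

/-- mixed synthesis operator `f ↦ ∑ Ga i * (G i f)`. -/
noncomputable def mixedS {Ga G : ℕ → K →L[ℂ] E} {BA B : ℝ}
    (hGa : Bessel Ga BA) (hG : Bessel G B) : K →L[ℂ] K :=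
  LinearMap.mkContinuous
    { toFun := fun f => ∑' i, adjoint (Ga i) (G i f)
      map_add' := fun f g => by
        have h1 : Summable fun i => adjoint (Ga i) (G i f) :=
          bessel_summable_synth hGa (hG.2 f).1
        have h2 : Summable fun i => adjoint (Ga i) (G i g) :=
          bessel_summable_synth hGa (hG.2 g).1
        simp only [map_add]
        exact Summable.tsum_add h1 h2
      map_smul' := fun c f => by
        simp only [map_smul, RingHom.id_apply]
        exact Summable.tsum_const_smul c (bessel_summable_synth hGa (hG.2 f).1) }
    (Real.sqrt (BA * B))
    (fun f => by
      have h1 := bessel_tsum_bound hGa (hG.2 f).1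
      have h2 := (hG.2 f).2
      have h3 : ‖∑' i, adjoint (Ga i) (G i f)‖ ^ 2 ≤ BA * B * ‖f‖ ^ 2 := by
        calc ‖∑' i, adjoint (Ga i) (G i f)‖ ^ 2 ≤ BA * ∑' i, ‖G i f‖ ^ 2 := h1
          _ ≤ BA * (B * ‖f‖ ^ 2) := mul_le_mul_of_nonneg_left h2 hGa.1
          _ = BA * B * ‖f‖ ^ 2 := by ring
      have h4 : Real.sqrt (‖∑' i, adjoint (Ga i) (G i f)‖ ^ 2)
          ≤ Real.sqrt (BA * B * ‖f‖ ^ 2) := Real.sqrt_le_sqrt h3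
      rw [Real.sqrt_sq (norm_nonneg _)] at h4
      calc ‖(fun f => ∑' i, adjoint (Ga i) (G i f)) f‖
          ≤ Real.sqrt (BA * B * ‖f‖ ^ 2) := h4
        _ = Real.sqrt (BA * B) * ‖f‖ := by
            rw [Real.sqrt_mul (mul_nonneg hGa.1 hG.1), Real.sqrt_sq (norm_nonneg f)])

lemma mixedS_hasSum {Ga G : ℕ → K →L[ℂ] E} {BA B : ℝ}
    (hGa : Bessel Ga BA) (hG : Bessel G B) (f : K) :
    HasSum (fun i => adjoint (Ga i) (G i f)) (mixedS hGa hG f) :=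
  (bessel_summable_synth hGa (hG.2 f).1).hasSum

lemma frame_coercive {G : ℕ → K →L[ℂ] E} {B : ℝ} (hG : Bessel G B) (f : K) :
    (⟪f, mixedS hG hG f⟫_ℂ).re = ∑' i, ‖G i f‖ ^ 2 := by
  have h1 : HasSum (fun i => ⟪f, adjoint (G i) (G i f)⟫_ℂ) ⟪f, mixedS hG hG f⟫_ℂ :=
    (innerSL ℂ f).hasSum (mixedS_hasSum hG hG f)
  have h2 : (fun i => ⟪f, adjoint (G i) (G i f)⟫_ℂ) = fun i => ((‖G i f‖ : ℂ) ^ 2) := by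
    funext i
    rw [adjoint_inner_right, inner_self_eq_norm_sq_to_K]
    norm_cast
  rw [h2] at h1
  have h3 : HasSum (fun i => Complex.reCLM ((‖G i f‖ : ℂ) ^ 2))
      (Complex.reCLM ⟪f, mixedS hG hG f⟫_ℂ) := Complex.reCLM.hasSum h1
  have h4 : (fun i => Complex.reCLM ((‖G i f‖ : ℂ) ^ 2)) = fun i => ‖G i f‖ ^ 2 := by
    funext i
    simp [← Complex.ofReal_pow]
  rw [h4] at h3
  exact h3.tsum_eq.symm

lemma frame_op_norm_lower {G : ℕ → K →L[ℂ] E} {A B : ℝ} (hA : 0 < A) (hG : Bessel G B)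
    (hlow : ∀ f : K, A * ‖f‖ ^ 2 ≤ ∑' i, ‖G i f‖ ^ 2) (f : K) :
    A * ‖f‖ ≤ ‖mixedS hG hG f‖ := by
  rcases eq_or_ne f 0 with rfl | hf
  · simp
  have h1 : A * ‖f‖ ^ 2 ≤ (⟪f, mixedS hG hG f⟫_ℂ).re := by
    rw [frame_coercive hG f]; exact hlow f
  have h2 : (⟪f, mixedS hG hG f⟫_ℂ).re ≤ ‖f‖ * ‖mixedS hG hG f‖ :=
    le_trans (Complex.re_le_norm _)
      (by exact norm_inner_le_norm _ _)
  have hfn : 0 < ‖f‖ := norm_pos_iff.2 hf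
  nlinarith

lemma frame_op_bijective {G : ℕ → K →L[ℂ] E} {A B : ℝ} (hA : 0 < A) (hG : Bessel G B)
    (hlow : ∀ f : K, A * ‖f‖ ^ 2 ≤ ∑' i, ‖G i f‖ ^ 2) :
    LinearMap.ker (mixedS hG hG : K →ₗ[ℂ] K) = ⊥ ∧ LinearMap.range (mixedS hG hG : K →ₗ[ℂ] K) = ⊤ := by
  set S := mixedS hG hG with hS
  have hlower : ∀ f : K, A * ‖f‖ ≤ ‖S f‖ := frame_op_norm_lower hA hG hlow
  have hinj : LinearMap.ker (S : K →ₗ[ℂ] K) = ⊥ := by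
    rw [LinearMap.ker_eq_bot']
    intro f hf
    have h := hlower f
    rw [show S f = 0 from hf] at h
    simp only [norm_zero] at h
    have : ‖f‖ ≤ 0 := by nlinarith
    exact norm_le_zero_iff.1 this
  refine ⟨hinj, ?_⟩
  have hanti : AntilipschitzWith (⟨A, hA.le⟩ : NNReal)⁻¹ S := by
    apply ContinuousLinearMap.antilipschitz_of_bound
    intro x
    show ‖x‖ ≤ A⁻¹ * ‖S x‖
    calc ‖x‖ = A⁻¹ * (A * ‖x‖) := by field_simp
      _ ≤ A⁻¹ * ‖S x‖ := mul_le_mul_of_nonneg_left (hlower x) (inv_nonneg.2 hA.le)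
  have hclosed : IsClosed ((LinearMap.range (S : K →ₗ[ℂ] K) : Submodule ℂ K) : Set K) := by
    have h : ((LinearMap.range (S : K →ₗ[ℂ] K) : Submodule ℂ K) : Set K) = Set.range S := by
      ext x; simp [LinearMap.mem_range]
    rw [h]
    exact hanti.isClosed_range S.uniformContinuous
  have : CompleteSpace (LinearMap.range (S : K →ₗ[ℂ] K) : Submodule ℂ K) := hclosed.completeSpace_coe
  have horth : (LinearMap.range (S : K →ₗ[ℂ] K) : Submodule ℂ K)ᗮ = ⊥ := by
    rw [Submodule.eq_bot_iff]
    intro g hg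
    have hmem : S g ∈ LinearMap.range (S : K →ₗ[ℂ] K) := LinearMap.mem_range_self _ g
    have h0 : ⟪S g, g⟫_ℂ = 0 := (Submodule.mem_orthogonal _ g).1 hg (S g) hmem
    have h1 : (⟪g, S g⟫_ℂ).re = 0 := by
      rw [← inner_conj_symm, h0]
      simp
    have h2 : A * ‖g‖ ^ 2 ≤ 0 := by
      rw [← h1, hS, frame_coercive hG g]
      exact hlow g
    have h3 : ‖g‖ ^ 2 ≤ 0 := by nlinarith
    have h4 : ‖g‖ = 0 := by nlinarith [sq_nonneg ‖g‖, norm_nonneg g]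
    exact norm_eq_zero.1 h4
  exact Submodule.orthogonal_eq_bot_iff.1 horth

end HSFrameAux

/-- `{G_i : K →L[ℂ] E}` is a HS-frame for `K` (here `E` plays the role of the Hilbert space
`HS(H)` of Hilbert–Schmidt operators): there are bounds `0 < A` and `B` with
`A‖f‖² ≤ ∑_i ‖G_i f‖² ≤ B‖f‖²` for all `f`. -/
def IsHSFrame {K E : Type*} [NormedAddCommGroup K] [InnerProductSpace ℂ K]
    [NormedAddCommGroup E] [InnerProductSpace ℂ E] (G : ℕ → K →L[ℂ] E) : Prop :=
  ∃ A B : ℝ, 0 < A ∧ ∀ f : K, Summable (fun i => ‖G i f‖ ^ 2) ∧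
    A * ‖f‖ ^ 2 ≤ ∑' i, ‖G i f‖ ^ 2 ∧ ∑' i, ‖G i f‖ ^ 2 ≤ B * ‖f‖ ^ 2

set_option maxHeartbeats 2000000 in
open HSFrameAux in
/-- A HS-frame is uniquely determined by its dual HS-frames: if every dual HS-frame of `G`
(a HS-frame `D` with `∑_i G_i*(D_i f) = f` for all `f`) is also a dual HS-frame of `F`,
then `G = F`. -/
theorem hs_frame_determined_by_duals
    {K E : Type*} [NormedAddCommGroup K] [InnerProductSpace ℂ K] [CompleteSpace K]
    [NormedAddCommGroup E] [InnerProductSpace ℂ E] [CompleteSpace E]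
    (G F : ℕ → K →L[ℂ] E) (hG : IsHSFrame G) (hF : IsHSFrame F)
    (hdual : ∀ D : ℕ → K →L[ℂ] E, IsHSFrame D →
      (∀ f : K, HasSum (fun i => ContinuousLinearMap.adjoint (G i) (D i f)) f) →
      (∀ f : K, HasSum (fun i => ContinuousLinearMap.adjoint (F i) (D i f)) f)) :
    ∀ i, G i = F i := by
  classical
  intro j
  obtain ⟨A, B0, hA, hGp⟩ := hG
  obtain ⟨AF, BF0, hAF, hFp⟩ := hF
  set B : ℝ := max B0 0 with hBdef
  have hGB : Bessel G B := ⟨le_max_right _ _, fun f =>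
    ⟨(hGp f).1, le_trans (hGp f).2.2 (mul_le_mul_of_nonneg_right (le_max_left _ _) (sq_nonneg _))⟩⟩
  have hFB : Bessel F (max BF0 0) := ⟨le_max_right _ _, fun f =>
    ⟨(hFp f).1, le_trans (hFp f).2.2 (mul_le_mul_of_nonneg_right (le_max_left _ _) (sq_nonneg _))⟩⟩
  have hlow : ∀ f : K, A * ‖f‖ ^ 2 ≤ ∑' i, ‖G i f‖ ^ 2 := fun f => (hGp f).2.1
  set S : K →L[ℂ] K := mixedS hGB hGB with hSdef
  obtain ⟨hker, hrange⟩ := frame_op_bijective hA hGB hlow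
  set Seq : K ≃L[ℂ] K := ContinuousLinearEquiv.ofBijective S hker hrange with hSeqdef
  set Sinv : K →L[ℂ] K := (Seq.symm : K →L[ℂ] K) with hSinvdef
  have hSeqS : ∀ f : K, Seq f = S f := fun f => rfl
  have hSSinv : ∀ f : K, S (Sinv f) = f := fun f => Seq.apply_symm_apply f
  have hSinvS : ∀ f : K, Sinv (S f) = f := fun f => Seq.symm_apply_apply f
  -- the canonical dual of G
  set D : ℕ → K →L[ℂ] E := fun i => (G i).comp Sinv with hDdef
  have hDapp : ∀ i f, D i f = G i (Sinv f) := fun i f => rfl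
  set CS : ℝ := ‖S‖ + 1 with hCSdef
  have hCS : 0 < CS := by positivity
  have hfle : ∀ f : K, ‖f‖ ≤ CS * ‖Sinv f‖ := fun f => by
    calc ‖f‖ = ‖S (Sinv f)‖ := by rw [hSSinv]
      _ ≤ ‖S‖ * ‖Sinv f‖ := S.le_opNorm _
      _ ≤ CS * ‖Sinv f‖ := by
          rw [hCSdef]; nlinarith [norm_nonneg (Sinv f)]
  set AD : ℝ := A / CS ^ 2 with hADdef
  have hAD : 0 < AD := by positivity
  have hDlow : ∀ f : K, AD * ‖f‖ ^ 2 ≤ ∑' i, ‖D i f‖ ^ 2 := fun f => by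
    simp only [hDapp]
    have h1 : A * ‖Sinv f‖ ^ 2 ≤ ∑' i, ‖G i (Sinv f)‖ ^ 2 := hlow _
    have h2 : ‖f‖ ^ 2 ≤ CS ^ 2 * ‖Sinv f‖ ^ 2 := by
      nlinarith [hfle f, norm_nonneg f, norm_nonneg (Sinv f)]
    have h3 : AD * ‖f‖ ^ 2 ≤ A * ‖Sinv f‖ ^ 2 := by
      rw [hADdef, div_mul_eq_mul_div, div_le_iff₀ (by positivity)]
      nlinarith
    linarith
  set BD : ℝ := B * ‖Sinv‖ ^ 2 with hBDdef
  have hDBessel : Bessel D BD := by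
    refine ⟨mul_nonneg hGB.1 (sq_nonneg _), fun f => ?_⟩
    refine ⟨by simpa only [hDapp] using (hGB.2 (Sinv f)).1, ?_⟩
    simp only [hDapp]
    calc ∑' i, ‖G i (Sinv f)‖ ^ 2 ≤ B * ‖Sinv f‖ ^ 2 := (hGB.2 _).2
      _ ≤ B * (‖Sinv‖ * ‖f‖) ^ 2 := by
          have h := Sinv.le_opNorm f
          have h2 : ‖Sinv f‖ ^ 2 ≤ (‖Sinv‖ * ‖f‖) ^ 2 := by
            nlinarith [norm_nonneg (Sinv f), norm_nonneg f, Sinv.opNorm_nonneg]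
          exact mul_le_mul_of_nonneg_left h2 hGB.1
      _ = BD * ‖f‖ ^ 2 := by rw [hBDdef]; ring
  have hDframe : IsHSFrame D :=
    ⟨AD, BD, hAD, fun f => ⟨(hDBessel.2 f).1, hDlow f, (hDBessel.2 f).2⟩⟩
  have hDdualG : ∀ f : K, HasSum (fun i => adjoint (G i) (D i f)) f := fun f => by
    have h := mixedS_hasSum hGB hGB (Sinv f)
    rw [← hSdef, hSSinv] at h
    simpa only [hDapp] using h
  have hFDdual := hdual D hDframe hDdualG
  -- the mixed operator T with F-adjoints equals S
  set T : K →L[ℂ] K := mixedS hFB hGB with hTdef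
  have hTapp : ∀ g : K, HasSum (fun i => adjoint (F i) (G i g)) (T g) := fun g =>
    mixedS_hasSum hFB hGB g
  have hTS : ∀ g : K, T g = S g := fun g => by
    have h1 : HasSum (fun i => adjoint (F i) (G i (Sinv (S g)))) (S g) := by
      simpa only [hDapp] using hFDdual (S g)
    rw [hSinvS] at h1
    exact (hTapp g).unique h1
  -- the key identity
  have key : ∀ (u : K) (e : E) (f : K),
      adjoint (F j) ((⟪u, f⟫_ℂ) • e) = adjoint (G j) ((⟪u, f⟫_ℂ) • e) := by
    intro u e f
    set Φ : K →L[ℂ] E := (innerSL ℂ u).smulRight e with hΦdef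
    have hΦapp : ∀ g : K, Φ g = (⟪u, g⟫_ℂ) • e := fun g => rfl
    set w : K →L[ℂ] K := Sinv.comp ((adjoint (G j)).comp Φ) with hwdef
    have hwapp : ∀ g, w g = Sinv (adjoint (G j) (Φ g)) := fun g => rfl
    have hSw : ∀ g, S (w g) = adjoint (G j) (Φ g) := fun g => by
      rw [hwapp, hSSinv]
    set Θ : ℕ → K →L[ℂ] E := fun i => (if i = j then Φ else 0) - (G i).comp w with hΘdef
    have hΘapp : ∀ i g, Θ i g = (if i = j then Φ g else 0) - G i (w g) := fun i g => by
      by_cases h : i = j <;> simp [hΘdef, h]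
    -- Bessel bound for Θ
    set BΘ : ℝ := 2 * ‖Φ‖ ^ 2 + 2 * B * ‖w‖ ^ 2 with hBΘdef
    have hB0 : (0:ℝ) ≤ B := hGB.1
    have hBΘ0 : 0 ≤ BΘ := by positivity
    have hΘle : ∀ i g, ‖Θ i g‖ ^ 2 ≤
        2 * (if i = j then ‖Φ g‖ ^ 2 else 0) + 2 * ‖G i (w g)‖ ^ 2 := by
      intro i g
      rw [hΘapp]
      by_cases h : i = j
      · subst h
        simp only [if_true]
        have hx : ‖Φ g - G i (w g)‖ ≤ ‖Φ g‖ + ‖G i (w g)‖ := norm_sub_le _ _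
        have hx2 : ‖Φ g - G i (w g)‖ ^ 2 ≤ (‖Φ g‖ + ‖G i (w g)‖) ^ 2 :=
          pow_le_pow_left₀ (norm_nonneg _) hx 2
        nlinarith [sq_nonneg (‖Φ g‖ - ‖G i (w g)‖)]
      · simp only [h, if_false, zero_sub, norm_neg]
        nlinarith [sq_nonneg (‖G i (w g)‖)]
    have hΘsummable : ∀ g, Summable (fun i => ‖Θ i g‖ ^ 2) := by
      intro g
      refine Summable.of_nonneg_of_le (fun i => by positivity) (hΘle · g) ?_
      exact (((hasSum_ite_eq j (‖Φ g‖ ^ 2)).summable).mul_left 2).add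
        (((hGB.2 (w g)).1).mul_left 2)
    have hΘsum : ∀ g, ∑' i, ‖Θ i g‖ ^ 2 ≤ BΘ * ‖g‖ ^ 2 := by
      intro g
      have h1 : ∑' i, ‖Θ i g‖ ^ 2 ≤
          ∑' i, (2 * (if i = j then ‖Φ g‖ ^ 2 else 0) + 2 * ‖G i (w g)‖ ^ 2) :=
        Summable.tsum_le_tsum (hΘle · g) (hΘsummable g)
          ((((hasSum_ite_eq j (‖Φ g‖ ^ 2)).summable).mul_left 2).add
            (((hGB.2 (w g)).1).mul_left 2))
      have h2 : ∑' i, (2 * (if i = j then ‖Φ g‖ ^ 2 else 0) + 2 * ‖G i (w g)‖ ^ 2)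
          = 2 * ‖Φ g‖ ^ 2 + 2 * ∑' i, ‖G i (w g)‖ ^ 2 := by
        rw [Summable.tsum_add (((hasSum_ite_eq j (‖Φ g‖ ^ 2)).summable).mul_left 2)
          (((hGB.2 (w g)).1).mul_left 2), tsum_mul_left, tsum_mul_left,
          (hasSum_ite_eq j (‖Φ g‖ ^ 2)).tsum_eq]
      have h3 : ∑' i, ‖G i (w g)‖ ^ 2 ≤ B * (‖w‖ * ‖g‖) ^ 2 := by
        refine le_trans (hGB.2 (w g)).2 ?_
        have h := w.le_opNorm g
        have h4 : ‖w g‖ ^ 2 ≤ (‖w‖ * ‖g‖) ^ 2 := by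
          nlinarith [norm_nonneg (w g), norm_nonneg g, w.opNorm_nonneg]
        exact mul_le_mul_of_nonneg_left h4 hB0
      have h5 : ‖Φ g‖ ^ 2 ≤ (‖Φ‖ * ‖g‖) ^ 2 := by
        have h := Φ.le_opNorm g
        nlinarith [norm_nonneg (Φ g), norm_nonneg g, Φ.opNorm_nonneg]
      calc ∑' i, ‖Θ i g‖ ^ 2 ≤ 2 * ‖Φ g‖ ^ 2 + 2 * ∑' i, ‖G i (w g)‖ ^ 2 := by
            rw [← h2]; exact h1
        _ ≤ 2 * (‖Φ‖ * ‖g‖) ^ 2 + 2 * (B * (‖w‖ * ‖g‖) ^ 2) := by nlinarith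
        _ = BΘ * ‖g‖ ^ 2 := by rw [hBΘdef]; ring
    -- synthesis of Θ against G is 0, against F it is the difference
    have hΘG : ∀ g, HasSum (fun i => adjoint (G i) (Θ i g)) 0 := by
      intro g
      have hb : HasSum (fun i => if i = j then adjoint (G j) (Φ g) else 0)
          (adjoint (G j) (Φ g)) := hasSum_ite_eq j _
      have hc : HasSum (fun i => adjoint (G i) (G i (w g))) (S (w g)) :=
        mixedS_hasSum hGB hGB (w g)
      have h := hb.sub hc
      rw [hSw, sub_self] at h
      refine HasSum.congr_fun h fun i => ?_
      by_cases hij : i = j <;> simp [hΘapp, hij, map_sub]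
    have hΘF : ∀ g, HasSum (fun i => adjoint (F i) (Θ i g))
        (adjoint (F j) (Φ g) - adjoint (G j) (Φ g)) := by
      intro g
      have hb : HasSum (fun i => if i = j then adjoint (F j) (Φ g) else 0)
          (adjoint (F j) (Φ g)) := hasSum_ite_eq j _
      have hc : HasSum (fun i => adjoint (F i) (G i (w g))) (T (w g)) := hTapp (w g)
      have h := hb.sub hc
      rw [hTS, hSw] at h
      refine HasSum.congr_fun h fun i => ?_
      by_cases hij : i = j <;> simp [hΘapp, hij, map_sub]
    -- the perturbed dual
    set ε : ℝ := AD / (2 * (AD + BΘ + 1)) with hεdef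
    have hden : (0:ℝ) < 2 * (AD + BΘ + 1) := by positivity
    have hε0 : 0 < ε := div_pos hAD hden
    have hεc : ε * (2 * (AD + BΘ + 1)) = AD := by
      rw [hεdef]; field_simp
    have hε1 : ε ≤ 1 := by nlinarith
    have hεne : (ε : ℂ) ≠ 0 := by
      simpa using (Complex.ofReal_ne_zero.2 hε0.ne')
    set D' : ℕ → K →L[ℂ] E := fun i => D i + (ε : ℂ) • Θ i with hD'def
    have hD'app : ∀ i g, D' i g = D i g + (ε : ℂ) • Θ i g := fun i g => rfl
    have hnorme : ∀ (v : E), ‖(ε : ℂ) • v‖ = ε * ‖v‖ := fun v => by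
      rw [norm_smul, Complex.norm_real, Real.norm_of_nonneg hε0.le]
    have htri_up : ∀ i g, ‖D' i g‖ ≤ ‖D i g‖ + ε * ‖Θ i g‖ := fun i g => by
      rw [hD'app]
      refine le_trans (norm_add_le _ _) ?_
      rw [hnorme]
    have htri_lo : ∀ i g, ‖D i g‖ ≤ ‖D' i g‖ + ε * ‖Θ i g‖ := fun i g => by
      have h : D i g = D' i g - (ε : ℂ) • Θ i g := by rw [hD'app]; abel
      rw [h]
      refine le_trans (norm_sub_le _ _) ?_
      rw [hnorme]
    have hD'le : ∀ i g, ‖D' i g‖ ^ 2 ≤ 2 * ‖D i g‖ ^ 2 + 2 * ‖Θ i g‖ ^ 2 := fun i g =>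
      pert_upper (norm_nonneg _) (norm_nonneg _) (norm_nonneg _) hε0 hε1 (htri_up i g)
    have hD'ge : ∀ i g, (1 - ε) * ‖D i g‖ ^ 2 - ε * ‖Θ i g‖ ^ 2 ≤ ‖D' i g‖ ^ 2 := fun i g =>
      pert_lower (norm_nonneg _) (norm_nonneg _) (norm_nonneg _) hε0 hε1 (htri_lo i g)
    have hD'summable : ∀ g, Summable (fun i => ‖D' i g‖ ^ 2) := fun g =>
      Summable.of_nonneg_of_le (fun i => by positivity) (hD'le · g)
        ((((hDBessel.2 g).1).mul_left 2).add ((hΘsummable g).mul_left 2))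
    have hD'up : ∀ g, ∑' i, ‖D' i g‖ ^ 2 ≤ (2 * BD + 2 * BΘ) * ‖g‖ ^ 2 := by
      intro g
      have h1 : ∑' i, ‖D' i g‖ ^ 2 ≤ ∑' i, (2 * ‖D i g‖ ^ 2 + 2 * ‖Θ i g‖ ^ 2) :=
        Summable.tsum_le_tsum (hD'le · g) (hD'summable g)
          ((((hDBessel.2 g).1).mul_left 2).add ((hΘsummable g).mul_left 2))
      have h2 : ∑' i, (2 * ‖D i g‖ ^ 2 + 2 * ‖Θ i g‖ ^ 2)
          = 2 * ∑' i, ‖D i g‖ ^ 2 + 2 * ∑' i, ‖Θ i g‖ ^ 2 := by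
        rw [Summable.tsum_add (((hDBessel.2 g).1).mul_left 2) ((hΘsummable g).mul_left 2),
          tsum_mul_left, tsum_mul_left]
      rw [h2] at h1
      have h3 := (hDBessel.2 g).2
      have h4 := hΘsum g
      nlinarith
    have hD'lo : ∀ g, (AD / 2) * ‖g‖ ^ 2 ≤ ∑' i, ‖D' i g‖ ^ 2 := by
      intro g
      have h1 : ∑' i, ((1 - ε) * ‖D i g‖ ^ 2 - ε * ‖Θ i g‖ ^ 2) ≤ ∑' i, ‖D' i g‖ ^ 2 :=
        Summable.tsum_le_tsum (hD'ge · g)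
          ((((hDBessel.2 g).1).mul_left (1 - ε)).sub ((hΘsummable g).mul_left ε))
          (hD'summable g)
      have h2 : ∑' i, ((1 - ε) * ‖D i g‖ ^ 2 - ε * ‖Θ i g‖ ^ 2)
          = (1 - ε) * ∑' i, ‖D i g‖ ^ 2 - ε * ∑' i, ‖Θ i g‖ ^ 2 := by
        rw [Summable.tsum_sub (((hDBessel.2 g).1).mul_left (1 - ε)) ((hΘsummable g).mul_left ε),
          tsum_mul_left, tsum_mul_left]
      rw [h2] at h1
      have h3 := hDlow g
      have h4 := hΘsum g
      have h5 : (1 - ε) * (AD * ‖g‖ ^ 2) ≤ (1 - ε) * ∑' i, ‖D i g‖ ^ 2 :=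
        mul_le_mul_of_nonneg_left h3 (by linarith)
      have h6 : ε * ∑' i, ‖Θ i g‖ ^ 2 ≤ ε * (BΘ * ‖g‖ ^ 2) :=
        mul_le_mul_of_nonneg_left h4 hε0.le
      have h8 : ε * (AD + BΘ) ≤ AD / 2 := by nlinarith [hεc, hε0]
      have h7 : (AD / 2) * ‖g‖ ^ 2 ≤ (1 - ε) * (AD * ‖g‖ ^ 2) - ε * (BΘ * ‖g‖ ^ 2) := by
        nlinarith [sq_nonneg ‖g‖, mul_le_mul_of_nonneg_right h8 (sq_nonneg ‖g‖)]
      calc (AD / 2) * ‖g‖ ^ 2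
          ≤ (1 - ε) * (AD * ‖g‖ ^ 2) - ε * (BΘ * ‖g‖ ^ 2) := h7
        _ ≤ (1 - ε) * ∑' i, ‖D i g‖ ^ 2 - ε * ∑' i, ‖Θ i g‖ ^ 2 := by linarith
        _ ≤ ∑' i, ‖D' i g‖ ^ 2 := h1
    have hD'frame : IsHSFrame D' :=
      ⟨AD / 2, 2 * BD + 2 * BΘ, by positivity,
        fun g => ⟨hD'summable g, hD'lo g, hD'up g⟩⟩
    have hD'dualG : ∀ g : K, HasSum (fun i => adjoint (G i) (D' i g)) g := by
      intro g
      have h := (hDdualG g).add ((hΘG g).const_smul ((ε : ℂ)))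
      rw [smul_zero, add_zero] at h
      refine HasSum.congr_fun h fun i => ?_
      rw [hD'app, map_add, map_smul]
    have hFD' := hdual D' hD'frame hD'dualG
    -- subtract the two dual relations for F
    have hsub : HasSum (fun i => (ε : ℂ) • adjoint (F i) (Θ i f)) 0 := by
      have h := (hFD' f).sub (hFDdual f)
      rw [sub_self] at h
      refine HasSum.congr_fun h fun i => ?_
      rw [hD'app, map_add, map_smul]
      abel
    have hzero : HasSum (fun i => adjoint (F i) (Θ i f)) 0 := by
      have h := hsub.const_smul ((ε : ℂ)⁻¹)
      rw [smul_zero] at h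
      refine HasSum.congr_fun h fun i => ?_
      rw [smul_smul, inv_mul_cancel₀ hεne, one_smul]
    have h := (hΘF f).unique hzero
    have h2 : adjoint (F j) (Φ f) = adjoint (G j) (Φ f) := by
      rwa [sub_eq_zero] at h
    rwa [hΦapp] at h2
  -- conclude
  rcases subsingleton_or_nontrivial K with hsub | hnt
  · ext x
    have hx : (x : K) = 0 := Subsingleton.elim _ _
    rw [hx]; simp
  · obtain ⟨u, hu⟩ := exists_ne (0 : K)
    have hc : (⟪u, u⟫_ℂ) ≠ 0 := fun h => hu (inner_self_eq_zero.1 h)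
    have hadj : adjoint (F j) = adjoint (G j) := by
      ext e
      have h := key u e u
      rw [map_smul, map_smul] at h
      exact smul_right_injective K hc h
    rw [← adjoint_adjoint (G j), ← adjoint_adjoint (F j), hadj]
end

section
/- Let m ∈ ℓ^∞(ℕ) be semi-normalized, i.e., 0 < inf_i |m_i| ≤ sup_i |m_i| < ∞, and let {G_i}, {F_i} be HS-Bessel sequences for K. If the multiplier M_{m,F,G}(f) = Σ_i m_i F_i*(G_i f) is invertible on K, then both {G_i} and {F_i} are HS-frames for K (i.e., each also satisfies a lower frame bound). -/
open scoped ComplexConjugate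

/-- Cauchy–Schwarz for tsums of nonnegative reals. -/
lemma tsum_mul_le_sqrt_mul_sqrt' (a b : ℕ → ℝ) (ha : ∀ i, 0 ≤ a i) (hb : ∀ i, 0 ≤ b i)
    (ha2 : Summable (fun i => a i ^ 2)) (hb2 : Summable (fun i => b i ^ 2)) :
    Summable (fun i => a i * b i) ∧
      ∑' i, a i * b i ≤ Real.sqrt (∑' i, a i ^ 2) * Real.sqrt (∑' i, b i ^ 2) := by
  have hsum : Summable (fun i => a i * b i) := by
    apply Summable.of_nonneg_of_le (fun i => mul_nonneg (ha i) (hb i))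
      (fun i => ?_) ((ha2.add hb2).div_const 2)
    nlinarith [sq_nonneg (a i - b i)]
  refine ⟨hsum, Summable.tsum_le_of_sum_le hsum fun s => ?_⟩
  calc ∑ i ∈ s, a i * b i
      ≤ Real.sqrt (∑ i ∈ s, a i ^ 2) * Real.sqrt (∑ i ∈ s, b i ^ 2) :=
        Real.sum_mul_le_sqrt_mul_sqrt s a b
    _ ≤ Real.sqrt (∑' i, a i ^ 2) * Real.sqrt (∑' i, b i ^ 2) := by
        have h1 := Summable.sum_le_tsum s (fun i _ => sq_nonneg (a i)) ha2
        have h2 := Summable.sum_le_tsum s (fun i _ => sq_nonneg (b i)) hb2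
        exact mul_le_mul (Real.sqrt_le_sqrt h1) (Real.sqrt_le_sqrt h2)
          (Real.sqrt_nonneg _) (Real.sqrt_nonneg _)

local notation "⟪" x ", " y "⟫" => @inner ℂ _ _ x y

lemma key_bound {K E : Type*} [NormedAddCommGroup K] [InnerProductSpace ℂ K] [CompleteSpace K]
    [NormedAddCommGroup E] [InnerProductSpace ℂ E] [CompleteSpace E]
    (G F : ℕ → K →L[ℂ] E) (m : ℕ → ℂ) (b : ℝ) (hb : ∀ i, ‖m i‖ ≤ b)
    (hG : ∀ f : K, Summable (fun i => ‖G i f‖ ^ 2))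
    (hF : ∀ f : K, Summable (fun i => ‖F i f‖ ^ 2))
    (M : K →L[ℂ] K)
    (hM : ∀ f : K,
      HasSum (fun i => m i • ContinuousLinearMap.adjoint (F i) (G i f)) (M f))
    (f g : K) :
    ‖⟪g, M f⟫‖ ≤ b * (Real.sqrt (∑' i, ‖F i g‖ ^ 2) * Real.sqrt (∑' i, ‖G i f‖ ^ 2)) := by
  obtain ⟨hcs, hcs2⟩ := tsum_mul_le_sqrt_mul_sqrt' (fun i => ‖F i g‖) (fun i => ‖G i f‖)
    (fun i => norm_nonneg _) (fun i => norm_nonneg _) (hF g) (hG f)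
  have hb0 : 0 ≤ b := le_trans (norm_nonneg _) (hb 0)
  have hsum : HasSum (fun i => ⟪g, m i • ContinuousLinearMap.adjoint (F i) (G i f)⟫)
      ⟪g, M f⟫ := (hM f).mapL (innerSL ℂ g)
  have hterm : ∀ i, ‖⟪g, m i • ContinuousLinearMap.adjoint (F i) (G i f)⟫‖
      ≤ b * (‖F i g‖ * ‖G i f‖) := by
    intro i
    rw [inner_smul_right, ContinuousLinearMap.adjoint_inner_right, norm_mul]
    exact mul_le_mul (hb i) (norm_inner_le_norm _ _) (norm_nonneg _) (by positivity)
  have hsn : Summable (fun i => ‖⟪g, m i • ContinuousLinearMap.adjoint (F i) (G i f)⟫‖) :=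
    Summable.of_nonneg_of_le (fun i => norm_nonneg _) hterm (hcs.mul_left b)
  calc ‖⟪g, M f⟫‖ = ‖∑' i, ⟪g, m i • ContinuousLinearMap.adjoint (F i) (G i f)⟫‖ := by
        rw [hsum.tsum_eq]
    _ ≤ ∑' i, ‖⟪g, m i • ContinuousLinearMap.adjoint (F i) (G i f)⟫‖ :=
        norm_tsum_le_tsum_norm hsn
    _ ≤ ∑' i, b * (‖F i g‖ * ‖G i f‖) := Summable.tsum_le_tsum hterm hsn (hcs.mul_left b)
    _ = b * ∑' i, ‖F i g‖ * ‖G i f‖ := tsum_mul_left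
    _ ≤ b * (Real.sqrt (∑' i, ‖F i g‖ ^ 2) * Real.sqrt (∑' i, ‖G i f‖ ^ 2)) := by
        exact mul_le_mul_of_nonneg_left hcs2 hb0

lemma lower_aux {K : Type*} [NormedAddCommGroup K] (S : K → ℝ) (hS : ∀ f, 0 ≤ S f)
    (C : ℝ) (hC : 0 < C) (h : ∀ f : K, ‖f‖ ^ 2 ≤ C * Real.sqrt (S f) * ‖f‖) :
    ∀ f : K, (1 / C ^ 2) * ‖f‖ ^ 2 ≤ S f := by
  intro f
  rcases eq_or_lt_of_le (norm_nonneg f) with h0 | h0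
  · rw [← h0]; simpa using hS f
  · have h1 : ‖f‖ ≤ C * Real.sqrt (S f) := by
      have := h f
      nlinarith
    have h2 : ‖f‖ ^ 2 ≤ C ^ 2 * S f := by
      have := Real.sq_sqrt (hS f)
      nlinarith [Real.sqrt_nonneg (S f), norm_nonneg f]
    rw [div_mul_eq_mul_div, one_mul, div_le_iff₀ (by positivity)]
    linarith [h2]

/-- If `m` is semi-normalized (`0 < inf_i |m_i| ≤ sup_i |m_i| < ∞`), `{G_i}` and `{F_i}`
are HS-Bessel sequences for `K` (here `E` plays the role of the Hilbert space `HS(H)` of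
Hilbert–Schmidt operators), and the multiplier `M f = ∑_i m_i F_i*(G_i f)` is invertible on
`K`, then both `{G_i}` and `{F_i}` are HS-frames, i.e. each also satisfies a lower frame
bound. -/
theorem hs_bessel_invertible_multiplier_frames
    {K E : Type*} [NormedAddCommGroup K] [InnerProductSpace ℂ K] [CompleteSpace K]
    [NormedAddCommGroup E] [InnerProductSpace ℂ E] [CompleteSpace E]
    (G F : ℕ → K →L[ℂ] E) (BG BF : ℝ) (m : ℕ → ℂ)
    (hm : ∃ a b : ℝ, 0 < a ∧ ∀ i, a ≤ ‖m i‖ ∧ ‖m i‖ ≤ b)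
    (hG : ∀ f : K, Summable (fun i => ‖G i f‖ ^ 2) ∧ ∑' i, ‖G i f‖ ^ 2 ≤ BG * ‖f‖ ^ 2)
    (hF : ∀ f : K, Summable (fun i => ‖F i f‖ ^ 2) ∧ ∑' i, ‖F i f‖ ^ 2 ≤ BF * ‖f‖ ^ 2)
    (M : K →L[ℂ] K)
    (hM : ∀ f : K,
      HasSum (fun i => m i • ContinuousLinearMap.adjoint (F i) (G i f)) (M f))
    (hMinv : ∃ N : K →L[ℂ] K, M.comp N = ContinuousLinearMap.id ℂ K ∧
      N.comp M = ContinuousLinearMap.id ℂ K) :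
    (∃ AG : ℝ, 0 < AG ∧ ∀ f : K, AG * ‖f‖ ^ 2 ≤ ∑' i, ‖G i f‖ ^ 2) ∧
      (∃ AF : ℝ, 0 < AF ∧ ∀ f : K, AF * ‖f‖ ^ 2 ≤ ∑' i, ‖F i f‖ ^ 2) := by
  obtain ⟨a, b, ha, hab⟩ := hm
  obtain ⟨N, hMN, hNM⟩ := hMinv
  set b' : ℝ := max b 1 with hb'def
  have hb'1 : 1 ≤ b' := le_max_right _ _
  have hb' : ∀ i, ‖m i‖ ≤ b' := fun i => le_trans (hab i).2 (le_max_left _ _)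
  set BG' : ℝ := max BG 1
  set BF' : ℝ := max BF 1
  have hBG'1 : (1:ℝ) ≤ BG' := le_max_right _ _
  have hBF'1 : (1:ℝ) ≤ BF' := le_max_right _ _
  have key := key_bound G F m b' hb' (fun f => (hG f).1) (fun f => (hF f).1) M hM
  -- sqrt Bessel bounds
  have hGb : ∀ g : K, Real.sqrt (∑' i, ‖G i g‖ ^ 2) ≤ Real.sqrt BG' * ‖g‖ := by
    intro g
    have h1 : ∑' i, ‖G i g‖ ^ 2 ≤ BG' * ‖g‖ ^ 2 :=
      le_trans (hG g).2 (mul_le_mul_of_nonneg_right (le_max_left _ _) (sq_nonneg _))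
    calc Real.sqrt (∑' i, ‖G i g‖ ^ 2) ≤ Real.sqrt (BG' * ‖g‖ ^ 2) := Real.sqrt_le_sqrt h1
      _ = Real.sqrt BG' * ‖g‖ := by
          rw [Real.sqrt_mul (by linarith), Real.sqrt_sq (norm_nonneg g)]
  have hFb : ∀ g : K, Real.sqrt (∑' i, ‖F i g‖ ^ 2) ≤ Real.sqrt BF' * ‖g‖ := by
    intro g
    have h1 : ∑' i, ‖F i g‖ ^ 2 ≤ BF' * ‖g‖ ^ 2 :=
      le_trans (hF g).2 (mul_le_mul_of_nonneg_right (le_max_left _ _) (sq_nonneg _))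
    calc Real.sqrt (∑' i, ‖F i g‖ ^ 2) ≤ Real.sqrt (BF' * ‖g‖ ^ 2) := Real.sqrt_le_sqrt h1
      _ = Real.sqrt BF' * ‖g‖ := by
          rw [Real.sqrt_mul (by linarith), Real.sqrt_sq (norm_nonneg g)]
  have hsBF : (1:ℝ) ≤ Real.sqrt BF' := by
    rw [show (1:ℝ) = Real.sqrt 1 by simp]; exact Real.sqrt_le_sqrt hBF'1
  have hsBG : (1:ℝ) ≤ Real.sqrt BG' := by
    rw [show (1:ℝ) = Real.sqrt 1 by simp]; exact Real.sqrt_le_sqrt hBG'1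
  set Nd := ContinuousLinearMap.adjoint N with hNd
  set CG : ℝ := b' * Real.sqrt BF' * max ‖Nd‖ 1 with hCGdef
  set CF : ℝ := b' * Real.sqrt BG' * max ‖N‖ 1 with hCFdef
  have hCG : 0 < CG := by
    apply mul_pos (mul_pos (by linarith) (by linarith)); exact lt_of_lt_of_le one_pos (le_max_right _ _)
  have hCF : 0 < CF := by
    apply mul_pos (mul_pos (by linarith) (by linarith)); exact lt_of_lt_of_le one_pos (le_max_right _ _)
  constructor
  · refine ⟨1 / CG ^ 2, by positivity, ?_⟩
    apply lower_aux _ (fun f => tsum_nonneg fun i => sq_nonneg _) CG hCG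
    intro f
    have heq : (⟪f, f⟫ : ℂ) = ⟪Nd f, M f⟫ := by
      rw [hNd, ContinuousLinearMap.adjoint_inner_left]
      have : N (M f) = f := by
        have := congrArg (fun T => T f) hNM; simpa using this
      rw [this]
    have h2 : ‖f‖ ^ 2 = ‖(⟪f, f⟫ : ℂ)‖ := by
      rw [inner_self_eq_norm_sq_to_K]; simp [sq_abs]
    have h3 := key f (Nd f)
    have h4 : Real.sqrt (∑' i, ‖F i (Nd f)‖ ^ 2) ≤ Real.sqrt BF' * (max ‖Nd‖ 1 * ‖f‖) :=
      le_trans (hFb (Nd f)) (by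
        apply mul_le_mul_of_nonneg_left _ (by linarith)
        exact le_trans (Nd.le_opNorm f)
          (mul_le_mul_of_nonneg_right (le_max_left _ _) (norm_nonneg f)))
    have hSnn : (0:ℝ) ≤ Real.sqrt (∑' i, ‖G i f‖ ^ 2) := Real.sqrt_nonneg _
    calc ‖f‖ ^ 2 = ‖(⟪Nd f, M f⟫ : ℂ)‖ := by rw [h2, heq]
      _ ≤ b' * (Real.sqrt (∑' i, ‖F i (Nd f)‖ ^ 2) * Real.sqrt (∑' i, ‖G i f‖ ^ 2)) := h3
      _ ≤ b' * (Real.sqrt BF' * (max ‖Nd‖ 1 * ‖f‖) * Real.sqrt (∑' i, ‖G i f‖ ^ 2)) := by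
          apply mul_le_mul_of_nonneg_left _ (by linarith)
          exact mul_le_mul_of_nonneg_right h4 hSnn
      _ = CG * Real.sqrt (∑' i, ‖G i f‖ ^ 2) * ‖f‖ := by rw [hCGdef]; ring
  · refine ⟨1 / CF ^ 2, by positivity, ?_⟩
    apply lower_aux _ (fun f => tsum_nonneg fun i => sq_nonneg _) CF hCF
    intro f
    have heq : (⟪f, f⟫ : ℂ) = ⟪f, M (N f)⟫ := by
      have : M (N f) = f := by
        have := congrArg (fun T => T f) hMN; simpa using this
      rw [this]
    have h2 : ‖f‖ ^ 2 = ‖(⟪f, f⟫ : ℂ)‖ := by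
      rw [inner_self_eq_norm_sq_to_K]; simp [sq_abs]
    have h3 := key (N f) f
    have h4 : Real.sqrt (∑' i, ‖G i (N f)‖ ^ 2) ≤ Real.sqrt BG' * (max ‖N‖ 1 * ‖f‖) :=
      le_trans (hGb (N f)) (by
        apply mul_le_mul_of_nonneg_left _ (by linarith)
        exact le_trans (N.le_opNorm f)
          (mul_le_mul_of_nonneg_right (le_max_left _ _) (norm_nonneg f)))
    have hSnn : (0:ℝ) ≤ Real.sqrt (∑' i, ‖F i f‖ ^ 2) := Real.sqrt_nonneg _
    calc ‖f‖ ^ 2 = ‖(⟪f, M (N f)⟫ : ℂ)‖ := by rw [h2, heq]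
      _ ≤ b' * (Real.sqrt (∑' i, ‖F i f‖ ^ 2) * Real.sqrt (∑' i, ‖G i (N f)‖ ^ 2)) := h3
      _ ≤ b' * (Real.sqrt (∑' i, ‖F i f‖ ^ 2) * (Real.sqrt BG' * (max ‖N‖ 1 * ‖f‖))) := by
          apply mul_le_mul_of_nonneg_left _ (by linarith)
          exact mul_le_mul_of_nonneg_left h4 hSnn
      _ = CF * Real.sqrt (∑' i, ‖F i f‖ ^ 2) * ‖f‖ := by rw [hCFdef]; ring
end
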